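/- Let G be a simple graph with maximum degree at most 3, and let F(G) be the associated set of flows in the Clos network C_{3, 3n+m}. If there is an assignment of middle switches to the incident flows of F(G) such that (P1) for every edge e of G the two incident flows entering e's edge block are assigned the same middle switch, and (P2) for every vertex v of G the incident flows leaving v's vertex block are assigned pairwise distinct middle switches, then this assignment extends to a routing of all of F(G) with congestion at most 1. -/
import Mathlib


open Finset

/-- Congestion of a routing `r` of a finite family of flows in the Clos network
`C_{N,R}`. -/
noncomputable def congestion {F : Type*} [Fintype F] {N R : ℕ}
    (inp out : F → Fin R) (dem : F → ℝ) (r : F → Fin N) : ℝ :=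
  ⨆ p : Fin R × Fin N,
    max (∑ f ∈ Finset.univ.filter (fun f => inp f = p.1 ∧ r f = p.2), dem f)
        (∑ f ∈ Finset.univ.filter (fun f => out f = p.1 ∧ r f = p.2), dem f)

/-- The flows `F(G)` of the reduction from a graph with `n` vertices and `m` edges:
`vert k i j` are the cross-gadget (vertex) flows of the `k`-th vertex block,
`edg e b` the two edge flows of the `e`-th edge block, and `inc e b` the two
incident flows of edge `e` (`b = false` for the endpoint `u e`, `b = true` for
`v e`). -/
inductive RFlow (n m : ℕ) where
  | vert (k : Fin n) (i : Fin 3) (j : Fin 2)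
  | edg (e : Fin m) (b : Fin 2)
  | inc (e : Fin m) (b : Bool)
  deriving DecidableEq, Fintype

/-- The endpoint of edge `e` selected by `b`. -/
def ept {n m : ℕ} (u v : Fin m → Fin n) (e : Fin m) (b : Bool) : Fin n :=
  if b then v e else u e

/-- Input switch (0-based) of each flow of `F(G)` in `C_{3, 3n+m}`. -/
def rInp {n m : ℕ} (u v : Fin m → Fin n) (rk : Fin m → Fin n → Fin 3) :
    RFlow n m → Fin (3 * n + m)
  | .vert k i _ => ⟨3 * k.1 + i.1, by have := k.2; have := i.2; omega⟩
  | .edg e _ => ⟨3 * n + e.1, by have := e.2; omega⟩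
  | .inc e b =>
      ⟨3 * (ept u v e b).1 + (rk e (ept u v e b)).1,
        by have := (ept u v e b).2; have := (rk e (ept u v e b)).2; omega⟩

/-- Output switch (0-based) of each flow of `F(G)`. -/
def rOut {n m : ℕ} : RFlow n m → Fin (3 * n + m)
  | .vert k _ j => ⟨3 * k.1 + j.1, by have := k.2; have := j.2; omega⟩
  | .edg e _ => ⟨3 * n + e.1, by have := e.2; omega⟩
  | .inc e _ => ⟨3 * n + e.1, by have := e.2; omega⟩

/-- Source index (0-based) of each flow of `F(G)`. -/
def rSrc {n m : ℕ} : RFlow n m → Fin 3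
  | .vert _ _ j => ⟨j.1, by have := j.2; omega⟩
  | .edg _ b => ⟨b.1, by have := b.2; omega⟩
  | .inc _ _ => 2

/-- Destination index (0-based) of each flow of `F(G)`. -/
def rDst {n m : ℕ} : RFlow n m → Fin 3
  | .vert _ i _ => i
  | .edg _ b => ⟨b.1, by have := b.2; omega⟩
  | .inc _ _ => 2

/-- Demands: `1` for vertex and edge flows, `1/2` for incident flows. -/
noncomputable def rDem {n m : ℕ} : RFlow n m → ℝ
  | .vert _ _ _ => 1
  | .edg _ _ => 1
  | .inc _ _ => 1 / 2

lemma extendPartial : ∀ f : Fin 3 → Option (Fin 3),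
    (∀ i j x, f i = some x → f j = some x → i = j) →
    ∃ τ : Fin 3 → Fin 3, Function.Injective τ ∧
      ∀ (i : Fin 3) (x : Fin 3), f i = some x → τ i = x := by
  decide

lemma sum_le_one_of_pairwise {α : Type*} (A : Finset α) (d : α → ℝ)
    (h1 : ∀ a ∈ A, d a ≤ 1)
    (hp : ∀ a ∈ A, ∀ b ∈ A, a ≠ b →
      d a ≤ 1/2 ∧ ∀ c ∈ A, c = a ∨ c = b) :
    ∑ a ∈ A, d a ≤ 1 := by
  classical
  by_cases h : ∀ a ∈ A, ∀ b ∈ A, a = b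
  · rcases A.eq_empty_or_nonempty with rfl | ⟨a, ha⟩
    · simp
    · have hA : A = {a} :=
        Finset.eq_singleton_iff_unique_mem.mpr ⟨ha, fun b hb => h b hb a ha⟩
      rw [hA, Finset.sum_singleton]; exact h1 a ha
  · push_neg at h
    obtain ⟨a, ha, b, hb, hab⟩ := h
    obtain ⟨hda, hall⟩ := hp a ha b hb hab
    obtain ⟨hdb, -⟩ := hp b hb a ha (Ne.symm hab)
    have hA : A = {a, b} := by
      apply Finset.Subset.antisymm
      · intro c hc; rcases hall c hc with rfl | rfl <;> simp
      · intro c hc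
        rcases Finset.mem_insert.mp hc with rfl | hc
        · exact ha
        · rw [Finset.mem_singleton] at hc; exact hc ▸ hb
    rw [hA, Finset.sum_pair hab]; linarith

/-- The routing extending `σ`. -/
def routeAux {n m : ℕ} (τ : Fin n → Fin 3 → Fin 3) (σ : Fin m → Bool → Fin 3) :
    RFlow n m → Fin 3
  | .vert k i j => ⟨((τ k i).1 + j.1 + 1) % 3, by omega⟩
  | .edg e b => ⟨((σ e false).1 + b.1 + 1) % 3, by omega⟩
  | .inc e b => ⟨(σ e b).1, (σ e b).2⟩

/-- If an assignment of middle switches to the incident flows of `F(G)` satisfies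
(P1) the two incident flows of each edge receive the same middle switch and
(P2) incident flows leaving the same vertex block receive pairwise distinct middle
switches, then it extends to a routing of all of `F(G)` with congestion at most `1`. -/
theorem reduction_routing_extension {n m : ℕ}
    (u v : Fin m → Fin n) (hne : ∀ e, u e ≠ v e)
    (hsimple : ∀ e e' : Fin m,
      (u e = u e' ∧ v e = v e') ∨ (u e = v e' ∧ v e = u e') → e = e')
    (hdeg : ∀ w : Fin n,
      (Finset.univ.filter fun e : Fin m => u e = w ∨ v e = w).card ≤ 3)
    (rk : Fin m → Fin n → Fin 3)
    (hrk : ∀ (w : Fin n) (e e' : Fin m), (u e = w ∨ v e = w) →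
      (u e' = w ∨ v e' = w) → rk e w = rk e' w → e = e')
    (σ : Fin m → Bool → Fin 3)
    (hP1 : ∀ e, σ e false = σ e true)
    (hP2 : ∀ (e e' : Fin m) (b b' : Bool), ept u v e b = ept u v e' b' →
      σ e b = σ e' b' → e = e' ∧ b = b') :
    ∃ r : RFlow n m → Fin 3,
      (∀ (e : Fin m) (b : Bool), r (.inc e b) = σ e b) ∧
      congestion (rInp u v rk) rOut rDem r ≤ 1 := by
  classical
  -- basic facts about endpoints
  have hept_or : ∀ (e : Fin m) (b : Bool) (w : Fin n),
      ept u v e b = w → u e = w ∨ v e = w := by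
    intro e b w h
    cases b
    · left; simpa [ept] using h
    · right; simpa [ept] using h
  have hept_b : ∀ (e : Fin m) (b b' : Bool), ept u v e b = ept u v e b' → b = b' := by
    intro e b b' h
    cases b <;> cases b' <;> simp [ept] at h ⊢
    · exact hne e h
    · exact hne e h.symm
  -- construct, for each vertex, an injective extension τ of the partial
  -- assignment given by σ on the incident flows leaving that vertex block
  have hτ : ∀ w : Fin n, ∃ τ : Fin 3 → Fin 3, Function.Injective τ ∧
      ∀ (e : Fin m) (b : Bool), ept u v e b = w → τ (rk e w) = σ e b := by
    intro w
    set Pw : Fin 3 → Prop := fun i =>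
      ∃ p : Fin m × Bool, ept u v p.1 p.2 = w ∧ rk p.1 w = i with hPwdef
    set pf : Fin 3 → Option (Fin 3) := fun i =>
      if h : Pw i then some (σ h.choose.1 h.choose.2) else none with hpf
    have huniq : ∀ (i : Fin 3) (e : Fin m) (b : Bool), ept u v e b = w → rk e w = i →
        ∀ (h : Pw i), h.choose = (e, b) := by
      intro i e b hept hrkeq h
      obtain ⟨h1, h2⟩ := h.choose_spec
      have he : h.choose.1 = e :=
        hrk w h.choose.1 e (hept_or _ _ _ h1) (hept_or _ _ _ hept)
          (h2.trans hrkeq.symm)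
      have hb : h.choose.2 = b := by
        rw [he] at h1
        exact hept_b e h.choose.2 b (h1.trans hept.symm)
      rw [Prod.ext_iff]; exact ⟨he, hb⟩
    have hpinj : ∀ i j x, pf i = some x → pf j = some x → i = j := by
      intro i j x hi hj
      rw [hpf] at hi hj
      simp only at hi hj
      by_cases h1 : Pw i
      · by_cases h2 : Pw j
        · rw [dif_pos h1] at hi
          rw [dif_pos h2] at hj
          obtain ⟨ha1, ha2⟩ := h1.choose_spec
          obtain ⟨hb1, hb2⟩ := h2.choose_spec
          have heq := hP2 h1.choose.1 h2.choose.1 h1.choose.2 h2.choose.2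
            (ha1.trans hb1.symm)
            (by rw [(Option.some.injEq _ _).mp hi, (Option.some.injEq _ _).mp hj])
          rw [← ha2, ← hb2, heq.1]
        · rw [dif_neg h2] at hj; exact absurd hj (by simp)
      · rw [dif_neg h1] at hi; exact absurd hi (by simp)
    obtain ⟨τ0, hinj, hspec⟩ := extendPartial pf hpinj
    refine ⟨τ0, hinj, ?_⟩
    intro e b hw
    have hP : Pw (rk e w) := ⟨(e, b), hw, rfl⟩
    have hch := huniq (rk e w) e b hw rfl hP
    apply hspec
    rw [hpf]
    simp only
    rw [dif_pos hP, hch]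
  choose τ hτinj hτspec using hτ
  -- the key property: τ extends σ at the relevant positions
  have hτσ : ∀ (e : Fin m) (b : Bool),
      τ (ept u v e b) (rk e (ept u v e b)) = σ e b := fun e b =>
    hτspec (ept u v e b) e b rfl
  refine ⟨routeAux τ σ, fun e b => rfl, ?_⟩
  -- injectivity on the input side
  have hInp : ∀ f g : RFlow n m, rInp u v rk f = rInp u v rk g →
      routeAux τ σ f = routeAux τ σ g → f = g := by
    intro f g hio hr
    cases f with
    | vert k i j =>
      cases g with
      | vert k' i' j' =>
        simp only [rInp, Fin.mk.injEq] at hio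
        have hbk := k.2; have hbk' := k'.2
        have hbi := i.2; have hbi' := i'.2
        have hk : k = k' := Fin.ext (by omega)
        have hi : i = i' := Fin.ext (by omega)
        subst hk; subst hi
        simp only [routeAux, Fin.mk.injEq] at hr
        have hbt := (τ k i).2
        have hbj := j.2; have hbj' := j'.2
        have hj : j = j' := Fin.ext (by omega)
        rw [hj]
      | edg e b =>
        exfalso
        simp only [rInp, Fin.mk.injEq] at hio
        have := k.2; have := i.2; have := e.2; omega
      | inc e b =>
        exfalso
        simp only [rInp, Fin.mk.injEq] at hio
        have hbi := i.2; have hbr := (rk e (ept u v e b)).2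
        have hk : k = ept u v e b := Fin.ext (by omega)
        have hi : i = rk e (ept u v e b) := Fin.ext (by omega)
        subst hk; subst hi
        have hv := congrArg Fin.val (hτσ e b)
        simp only [routeAux, Fin.mk.injEq] at hr
        have := (σ e b).2; have := j.2
        omega
    | edg e b =>
      cases g with
      | vert k i j =>
        exfalso
        simp only [rInp, Fin.mk.injEq] at hio
        have := k.2; have := i.2; omega
      | edg e' b' =>
        simp only [rInp, Fin.mk.injEq] at hio
        have he : e = e' := Fin.ext (by omega)
        subst he
        simp only [routeAux, Fin.mk.injEq] at hr
        have := (σ e false).2; have := b.2; have := b'.2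
        have hb : b = b' := Fin.ext (by omega)
        rw [hb]
      | inc e' b' =>
        exfalso
        simp only [rInp, Fin.mk.injEq] at hio
        have := (ept u v e' b').2; have := (rk e' (ept u v e' b')).2; omega
    | inc e b =>
      cases g with
      | vert k i j =>
        exfalso
        simp only [rInp, Fin.mk.injEq] at hio
        have hbi := i.2; have hbr := (rk e (ept u v e b)).2
        have hk : ept u v e b = k := Fin.ext (by omega)
        have hi : rk e (ept u v e b) = i := Fin.ext (by omega)
        have hv := congrArg Fin.val (hτσ e b)
        rw [hi, hk] at hv
        simp only [routeAux, Fin.mk.injEq] at hr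
        have := (σ e b).2; have := j.2
        omega
      | edg e' b' =>
        exfalso
        simp only [rInp, Fin.mk.injEq] at hio
        have := (ept u v e b).2; have := (rk e (ept u v e b)).2; omega
      | inc e' b' =>
        simp only [rInp, Fin.mk.injEq] at hio
        have hbr := (rk e (ept u v e b)).2
        have hbr' := (rk e' (ept u v e' b')).2
        have hw : ept u v e b = ept u v e' b' := Fin.ext (by omega)
        have hwv := congrArg Fin.val hw
        have hrke : rk e (ept u v e b) = rk e' (ept u v e' b') := Fin.ext (by omega)
        rw [hw] at hrke
        have he : e = e' :=
          hrk (ept u v e' b') e e' (hept_or e b _ hw) (hept_or e' b' _ rfl) hrke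
        subst he
        have hb : b = b' := hept_b e b b' hw
        rw [hb]
  -- near-injectivity on the output side
  have hOut : ∀ f g : RFlow n m, rOut f = rOut g →
      routeAux τ σ f = routeAux τ σ g → f = g ∨ ∃ e : Fin m,
        (f = .inc e false ∧ g = .inc e true) ∨ (f = .inc e true ∧ g = .inc e false) := by
    intro f g hio hr
    cases f with
    | vert k i j =>
      cases g with
      | vert k' i' j' =>
        left
        simp only [rOut, Fin.mk.injEq] at hio
        have hbk := k.2; have hbk' := k'.2
        have hbj := j.2; have hbj' := j'.2
        have hk : k = k' := Fin.ext (by omega)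
        have hj : j = j' := Fin.ext (by omega)
        subst hk; subst hj
        simp only [routeAux, Fin.mk.injEq] at hr
        have := (τ k i).2; have := (τ k i').2
        have hi : i = i' := hτinj k (Fin.ext (by omega))
        rw [hi]
      | edg e b =>
        exfalso
        simp only [rOut, Fin.mk.injEq] at hio
        have := k.2; have := j.2; omega
      | inc e b =>
        exfalso
        simp only [rOut, Fin.mk.injEq] at hio
        have := k.2; have := j.2; omega
    | edg e b =>
      cases g with
      | vert k i j =>
        exfalso
        simp only [rOut, Fin.mk.injEq] at hio
        have := k.2; have := j.2; omega
      | edg e' b' =>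
        left
        simp only [rOut, Fin.mk.injEq] at hio
        have he : e = e' := Fin.ext (by omega)
        subst he
        simp only [routeAux, Fin.mk.injEq] at hr
        have := (σ e false).2; have := b.2; have := b'.2
        have hb : b = b' := Fin.ext (by omega)
        rw [hb]
      | inc e' b' =>
        exfalso
        simp only [rOut, Fin.mk.injEq] at hio
        have he : e = e' := Fin.ext (by omega)
        subst he
        have hσ : σ e b' = σ e false := by cases b' <;> simp [hP1 e]
        have hv := congrArg Fin.val hσ
        simp only [routeAux, Fin.mk.injEq] at hr
        have := (σ e false).2; have := b.2
        omega
    | inc e b =>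
      cases g with
      | vert k i j =>
        exfalso
        simp only [rOut, Fin.mk.injEq] at hio
        have := k.2; have := j.2; omega
      | edg e' b' =>
        exfalso
        simp only [rOut, Fin.mk.injEq] at hio
        have he : e = e' := Fin.ext (by omega)
        subst he
        have hσ : σ e b = σ e false := by cases b <;> simp [hP1 e]
        have hv := congrArg Fin.val hσ
        simp only [routeAux, Fin.mk.injEq] at hr
        have := (σ e false).2; have := b'.2
        omega
      | inc e' b' =>
        simp only [rOut, Fin.mk.injEq] at hio
        have he : e = e' := Fin.ext (by omega)
        subst he
        cases b <;> cases b'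
        · left; rfl
        · right; exact ⟨e, Or.inl ⟨rfl, rfl⟩⟩
        · right; exact ⟨e, Or.inr ⟨rfl, rfl⟩⟩
        · left; rfl
  -- demands are at most 1
  have hdem1 : ∀ f : RFlow n m, rDem f ≤ 1 := by
    intro f; cases f <;> norm_num [rDem]
  have hdemhalf : ∀ (e : Fin m) (b : Bool), rDem (RFlow.inc e b : RFlow n m) ≤ 1/2 := by
    intro e b; norm_num [rDem]
  -- bound the congestion
  rw [congestion]
  apply Real.iSup_le _ zero_le_one
  intro p
  apply max_le
  · apply sum_le_one_of_pairwise
    · intro a _; exact hdem1 a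
    · intro a ha b hb hab
      exfalso
      rw [Finset.mem_filter] at ha hb
      exact hab (hInp a b (ha.2.1.trans hb.2.1.symm) (ha.2.2.trans hb.2.2.symm))
  · apply sum_le_one_of_pairwise
    · intro a _; exact hdem1 a
    · intro a ha b hb hab
      rw [Finset.mem_filter] at ha hb
      rcases hOut a b (ha.2.1.trans hb.2.1.symm) (ha.2.2.trans hb.2.2.symm) with
        heq | ⟨e, hcase⟩
      · exact absurd heq hab
      constructor
      · rcases hcase with ⟨rfl, rfl⟩ | ⟨rfl, rfl⟩ <;> exact hdemhalf e _
      · intro c hc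
        rw [Finset.mem_filter] at hc
        by_cases hca : c = a
        · left; exact hca
        · rcases hOut c a (hc.2.1.trans ha.2.1.symm) (hc.2.2.trans ha.2.2.symm) with
            heq | ⟨e', hc2⟩
          · exact absurd heq hca
          · right
            rcases hcase with ⟨ha1, hb1⟩ | ⟨ha1, hb1⟩ <;> subst ha1 <;>
              rcases hc2 with ⟨hc1', ha2'⟩ | ⟨hc1', ha2'⟩
            · exact absurd ha2' (by simp)
            · have he : e' = e := by
                have := (RFlow.inc.injEq _ _ _ _).mp ha2'
                exact this.1.symm
              subst he
              rw [hc1', hb1]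
            · have he : e' = e := by
                have := (RFlow.inc.injEq _ _ _ _).mp ha2'
                exact this.1.symm
              subst he
              rw [hc1', hb1]
            · exact absurd ha2' (by simp)
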